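/- arXiv:1708.02364 — 2 statements merged into one kernel-verified Lean document; each statement's English description precedes it below -/
import Mathlib

section
/- Let R be a commutative ring and S a semicontent R-algebra. If f ∈ S is such that c(f) contains a regular element (non-zerodivisor) of R, then f is a regular element of S. -/
/-- The Ohm-Rush content of `f ∈ M`: the intersection of all ideals `I` of `R`
with `f ∈ I·M`. -/
noncomputable def ohmRushContent (R : Type*) {M : Type*} [CommRing R] [AddCommGroup M]
    [Module R M] (f : M) : Ideal R :=
  sInf {I : Ideal R | f ∈ I • (⊤ : Submodule R M)}

/-- `M` is an Ohm-Rush module if `f ∈ c(f)·M` for every `f ∈ M`. -/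
def IsOhmRush (R M : Type*) [CommRing R] [AddCommGroup M] [Module R M] : Prop :=
  ∀ f : M, f ∈ ohmRushContent R f • (⊤ : Submodule R M)

/-- `S` is a semicontent `R`-algebra: a faithfully flat Ohm-Rush algebra such that
for every multiplicative subset `W` of `R` and all `f, g ∈ S` with `c(f)_W = R_W`,
one has `c(fg)_W = c(g)_W`. -/
def IsSemicontentAlgebra (R S : Type*) [CommRing R] [CommRing S] [Algebra R S] : Prop :=
  Module.FaithfullyFlat R S ∧ IsOhmRush R S ∧
    ∀ (W : Submonoid R) (f g : S),
      Ideal.map (algebraMap R (Localization W)) (ohmRushContent R f) = ⊤ →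
      Ideal.map (algebraMap R (Localization W)) (ohmRushContent R (f * g)) =
        Ideal.map (algebraMap R (Localization W)) (ohmRushContent R g)

/-- `f` is a Gaussian element: `c(fg) = c(f)·c(g)` for all `g ∈ S`. -/
def IsGaussianElement (R : Type*) {S : Type*} [CommRing R] [CommRing S] [Algebra R S]
    (f : S) : Prop :=
  ∀ g : S, ohmRushContent R (f * g) = ohmRushContent R f * ohmRushContent R g

/-! Localize at the powers of a regular element `r ∈ c(f)`. There `c(f)` becomes the unit
ideal, so the semicontent property turns `f * g = 0` into `c(g)_r = c(0)_r = 0`. Since `r` is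
regular, `R → R_r` is injective, hence `c(g) = 0`, and the Ohm-Rush property gives `g = 0`. -/

section OhmRush

variable {R M : Type*} [CommRing R] [AddCommGroup M] [Module R M]

theorem ohmRushContent_zero : ohmRushContent R (0 : M) = ⊥ :=
  le_bot_iff.mp <| sInf_le (show (0 : M) ∈ (⊥ : Ideal R) • (⊤ : Submodule R M) from
    Submodule.zero_mem _)

theorem IsOhmRush.eq_zero_of_ohmRushContent_eq_bot (h : IsOhmRush R M) {f : M}
    (hf : ohmRushContent R f = ⊥) : f = 0 := by
  simpa [hf, Submodule.bot_smul] using h f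

end OhmRush

theorem Ideal.map_localization_powers_eq_top_of_mem {R : Type*} [CommRing R] {I : Ideal R}
    {r : R} (hr : r ∈ I) :
    I.map (algebraMap R (Localization (Submonoid.powers r))) = ⊤ :=
  Ideal.eq_top_of_isUnit_mem _ (Ideal.mem_map_of_mem _ hr)
    (IsLocalization.map_units _ ⟨r, Submonoid.mem_powers r⟩)

/-- In a semicontent algebra, if `c(f)` contains a regular element of `R`, then `f` is a
regular element of `S`. -/
theorem regular_of_content_regular (R S : Type*) [CommRing R] [CommRing S]
    [Algebra R S] (hsc : IsSemicontentAlgebra R S) (f : S)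
    (hreg : ∃ r ∈ ohmRushContent R f, r ∈ nonZeroDivisors R) :
    f ∈ nonZeroDivisors S := by
  obtain ⟨_, hohmRush, hsemicontent⟩ := hsc
  obtain ⟨r, hrf, hr⟩ := hreg
  let φ := algebraMap R (Localization (Submonoid.powers r))
  have hφ : Function.Injective φ :=
    IsLocalization.injective _ (Submonoid.powers_le.mpr hr)
  refine mem_nonZeroDivisors_iff_right.mpr fun g hgf => ?_
  have hcg : (ohmRushContent R g).map φ = ⊥ := by
    rw [← hsemicontent _ f g (Ideal.map_localization_powers_eq_top_of_mem hrf), mul_comm, hgf,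
      ohmRushContent_zero, Ideal.map_bot]
  exact hohmRush.eq_zero_of_ohmRushContent_eq_bot
    ((Ideal.map_eq_bot_iff_of_injective hφ).mp hcg)
end

section
/- Let R be an integral domain. If there exists an R-algebra S that is free of rank > 1 as an R-module and is Gaussian over R (i.e., c(fg) = c(f)·c(g) for all f, g ∈ S), then R is a Prüfer domain. -/
section Content

variable {R M : Type*} [CommRing R] [AddCommGroup M] [Module R M]

theorem ohmRushContent_le {f : M} {I : Ideal R} (h : f ∈ I • (⊤ : Submodule R M)) :
    ohmRushContent R f ≤ I :=
  sInf_le h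

theorem Module.Basis.repr_mem_ohmRushContent {ι : Type*} (b : Module.Basis ι R M) (f : M)
    (i : ι) : b.repr f i ∈ ohmRushContent R f := by
  refine Submodule.mem_sInf.mpr fun I (hf : f ∈ I • (⊤ : Submodule R M)) => ?_
  have hle : I • (⊤ : Submodule R M) ≤ I.comap (b.coord i) :=
    Submodule.smul_le.mpr fun r hr m _ => by simpa using Ideal.mul_mem_right (b.repr m i) I hr
  exact hle hf

end Content

/-- `c(f) c(g) ⊆ c(f g)` for the linear polynomials `f = a + b X`, `g = c + d X`; the other
generators of `(a, b) (c, d)` are covered by symmetry. -/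
def LinearGaussian (A : Type*) [CommRing A] : Prop :=
  ∀ a b c d : A, a * d ∈ Ideal.span {a * c, a * d + b * c, b * d}

theorem linearGaussian_of_basis {R S ι : Type*} [CommRing R] [CommRing S] [Algebra R S]
    (e : Module.Basis ι R S) {i j : ι} (hij : i ≠ j)
    (hGauss : ∀ f g : S,
      ohmRushContent R (f * g) = ohmRushContent R f * ohmRushContent R g) :
    LinearGaussian R := by
  intro a b c d
  set f := a • e i + b • e j
  set g := c • e i + d • e j
  have hfg : f * g = (a * c) • (e i * e i) + (a * d + b * c) • (e i * e j)
      + (b * d) • (e j * e j) := by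
    simp only [f, g, add_mul, mul_add, smul_mul_smul_comm, add_smul, mul_comm (e j) (e i)]
    abel
  have hle : ohmRushContent R (f * g) ≤ Ideal.span {a * c, a * d + b * c, b * d} := by
    apply ohmRushContent_le
    rw [hfg]
    refine Submodule.add_mem _ (Submodule.add_mem _ ?_ ?_) ?_ <;>
      exact Submodule.smul_mem_smul (Ideal.subset_span (by simp)) trivial
  have ha : e.repr f i = a := by simp [f, hij]
  have hd : e.repr g j = d := by simp [g, hij]
  refine hle ?_
  rw [hGauss, ← ha, ← hd]
  exact Ideal.mul_mem_mul (e.repr_mem_ohmRushContent f i) (e.repr_mem_ohmRushContent g j)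

namespace LinearGaussian

variable {A : Type*} [CommRing A] [IsDomain A]

theorem dvd_of_mul_self_eq (hA : LinearGaussian A) {x y c d : A}
    (h : y * y = c * (x * x) + d * (x * y)) : x ∣ y := by
  -- by `h`, all coefficients of `(x - y X) (x + (y - d x) X)` are multiples of `x²`
  obtain ⟨p, q, r, hpqr⟩ := Submodule.mem_span_triple.mp (hA x (-y) x (y - d * x))
  simp only [smul_eq_mul] at hpqr
  rcases eq_or_ne x 0 with rfl | hx
  · simpa using h
  refine (mul_dvd_mul_iff_left hx).mp ⟨p - q * d - r * c + d, ?_⟩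
  linear_combination -hpqr - r * h

theorem exists_add_eq_one_dvd (hA : LinearGaussian A) (x y : A) :
    ∃ α β : A, α + β = 1 ∧ y ∣ α * x ∧ x ∣ β * y := by
  obtain ⟨p, q, r, h⟩ := Submodule.mem_span_triple.mp (hA x y y x)
  simp only [smul_eq_mul] at h
  -- `(1 - q) x / y` and `q y / x` are roots of `t² = q (1 - q) ± (p + r) t`
  refine ⟨1 - q, q, by ring, hA.dvd_of_mul_self_eq (c := q * (1 - q)) (d := p + r) ?_,
    hA.dvd_of_mul_self_eq (c := q * (1 - q)) (d := -(p + r)) ?_⟩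
  · linear_combination (q - 1) * h
  · linear_combination q * h

end LinearGaussian

namespace Ideal

variable {R : Type*} [CommRing R]

theorem dvd_mul_of_mem_sup {I₁ I₂ : Ideal R} {a₁ a₂ t₁ t₂ α : R}
    (h₁ : ∀ x ∈ I₁, a₁ ∣ t₁ * x) (h₂ : ∀ x ∈ I₂, a₂ ∣ t₂ * x) (hα : a₂ ∣ α * a₁) :
    ∀ x ∈ I₁ ⊔ I₂, a₂ ∣ α * t₁ * t₂ * x := by
  intro x hx
  obtain ⟨y, hy, z, hz, rfl⟩ := Submodule.mem_sup.mp hx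
  have hy' : a₂ ∣ α * (t₁ * y) := hα.trans (mul_dvd_mul_left α (h₁ y hy))
  convert dvd_add (hy'.mul_left t₂) ((h₂ z hz).mul_left (α * t₁)) using 1
  ring

theorem exists_dvd_mul_of_fg
    (hpair : ∀ x y : R, ∃ α β : R, α + β = 1 ∧ y ∣ α * x ∧ x ∣ β * y)
    (p : Ideal R) [p.IsPrime] {I : Ideal R} (hI : I.FG) :
    ∃ a ∈ I, ∃ t ∉ p, ∀ x ∈ I, a ∣ t * x := by
  induction I, hI using Submodule.fg_induction with
  | singleton a =>
    exact ⟨a, Submodule.mem_span_singleton_self a, 1, p.primeCompl.one_mem,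
      fun x hx => by simpa using Ideal.mem_span_singleton.mp hx⟩
  | sup I₁ I₂ _ _ ih₁ ih₂ =>
    obtain ⟨a₁, ha₁, t₁, ht₁, h₁⟩ := ih₁
    obtain ⟨a₂, ha₂, t₂, ht₂, h₂⟩ := ih₂
    obtain ⟨α, β, hαβ, hα, hβ⟩ := hpair a₁ a₂
    by_cases hαp : α ∈ p
    · have hβp : β ∉ p := fun hβp => p.primeCompl.one_mem (hαβ ▸ p.add_mem hαp hβp)
      refine ⟨a₁, mem_sup_left ha₁, β * t₂ * t₁, ?_, ?_⟩
      · exact p.primeCompl.mul_mem (p.primeCompl.mul_mem hβp ht₂) ht₁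
      · exact sup_comm I₁ I₂ ▸ dvd_mul_of_mem_sup h₂ h₁ hβ
    · refine ⟨a₂, mem_sup_right ha₂, α * t₁ * t₂, ?_, dvd_mul_of_mem_sup h₁ h₂ hα⟩
      exact p.primeCompl.mul_mem (p.primeCompl.mul_mem hαp ht₁) ht₂

end Ideal

theorem FractionalIdeal.isUnit_coeIdeal_of_forall_isMaximal {R K : Type*} [CommRing R]
    [IsDomain R] [Field K] [Algebra R K] [IsFractionRing R K] {I : Ideal R} (hI : I ≠ ⊥)
    (hloc : ∀ m : Ideal R, m.IsMaximal → ∃ a ∈ I, ∃ t ∉ m, ∀ x ∈ I, a ∣ t * x) :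
    IsUnit (I : FractionalIdeal (nonZeroDivisors R) K) := by
  rw [← mul_inv_cancel_iff_isUnit]
  obtain ⟨T, hT⟩ := le_one_iff_exists_coeIdeal.mp
    (mul_one_div_le_one (I := (I : FractionalIdeal (nonZeroDivisors R) K)))
  suffices T = ⊤ by rw [inv_eq, ← hT, this, coeIdeal_top]
  by_contra hT_ne
  obtain ⟨m, hm, hTm⟩ := Ideal.exists_le_maximal T hT_ne
  obtain ⟨a, haI, t, htm, hdvd⟩ := hloc m hm
  have ht : t ≠ 0 := fun h => htm (h ▸ m.zero_mem)
  have ha : a ≠ 0 := by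
    rintro rfl
    refine hI (eq_bot_iff.mpr fun x hx => ?_)
    simpa [ht] using zero_dvd_iff.mp (hdvd x hx)
  set φ := algebraMap R K
  have hφa : φ a ≠ 0 := (map_ne_zero_iff φ (IsFractionRing.injective R K)).mpr ha
  have hinv : φ t / φ a ∈ (I : FractionalIdeal (nonZeroDivisors R) K)⁻¹ := by
    rw [mem_inv_iff (coeIdeal_ne_zero.mpr hI)]
    intro y hy
    obtain ⟨x, hx, rfl⟩ := (mem_coeIdeal _).mp hy
    obtain ⟨k, hk⟩ := hdvd x hx
    refine (mem_one_iff _).mpr ⟨k, ?_⟩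
    rw [div_mul_eq_mul_div, eq_div_iff hφa, ← map_mul, ← map_mul, hk, mul_comm a k]
  have htT : φ t ∈ (T : FractionalIdeal (nonZeroDivisors R) K) := by
    rw [hT, ← mul_div_cancel₀ (φ t) hφa]
    exact mul_mem_mul (mem_coeIdeal_of_mem _ haI) hinv
  obtain ⟨t', ht'T, ht't⟩ := (mem_coeIdeal _).mp htT
  exact htm (hTm (IsFractionRing.injective R K ht't ▸ ht'T))

/-- If an integral domain `R` admits a Gaussian algebra `S` that is free of rank `> 1`
as an `R`-module, then `R` is a Prüfer domain, i.e. every nonzero finitely generated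
ideal of `R` is invertible as a fractional ideal. -/
theorem prufer_of_gaussian_free_algebra (R S : Type*) [CommRing R] [IsDomain R]
    [CommRing S] [Algebra R S] [Module.Free R S] (hrank : 1 < Module.rank R S)
    (hGauss : ∀ f g : S,
      ohmRushContent R (f * g) = ohmRushContent R f * ohmRushContent R g) :
    ∀ I : Ideal R, I.FG → I ≠ ⊥ →
      IsUnit (I : FractionalIdeal (nonZeroDivisors R) (FractionRing R)) := by
  intro I hI hI_ne
  obtain ⟨i, j, hij⟩ : ∃ i j : Module.Free.ChooseBasisIndex R S, i ≠ j :=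
    nontrivial_iff.mp <| Cardinal.one_lt_iff_nontrivial.mp <|
      Module.Free.rank_eq_card_chooseBasisIndex R S ▸ hrank
  have hR : LinearGaussian R :=
    linearGaussian_of_basis (Module.Free.chooseBasis R S) hij hGauss
  refine FractionalIdeal.isUnit_coeIdeal_of_forall_isMaximal hI_ne fun m hm => ?_
  have := hm.isPrime
  exact Ideal.exists_dvd_mul_of_fg hR.exists_add_eq_one_dvd m hI
end
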